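/- Suppose in the block system ẋ₁ = A₁₁x₁ + A₁₂x₂, ε ẋ₂ = A₂₁x₁ + A₂₂x₂ the matrices A₁₁, A₁₂, A₂₁, A₂₂ are all diagonal (so the system decouples into 2×2 subsystems). If A₂₂ is Hurwitz and A₁₁ - A₁₂A₂₂⁻¹A₂₁ is Hurwitz, then for all sufficiently small ε > 0 the full system matrix [[A₁₁, A₁₂],[A₂₁/ε, A₂₂/ε]] is Hurwitz. -/
import Mathlib


open Matrix

lemma quad_root_re_neg (x y z : ℝ) (μ : ℂ) (hT : x + y < 0) (hD : 0 < x * y - z)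
    (h : (μ - (x:ℂ)) * (μ - (y:ℂ)) - (z:ℂ) = 0) : μ.re < 0 := by
  have him : (μ.re - x) * μ.im + (μ.re - y) * μ.im = 0 := by
    have := congrArg Complex.im h
    simp [Complex.mul_im, Complex.sub_im, Complex.sub_re] at this
    nlinarith [this]
  have hre : (μ.re - x) * (μ.re - y) - μ.im * μ.im - z = 0 := by
    have := congrArg Complex.re h
    simp [Complex.mul_re, Complex.sub_im, Complex.sub_re] at this
    nlinarith [this]
  rcases eq_or_ne μ.im 0 with hv | hv
  · rw [hv] at hre
    by_contra hx
    push_neg at hx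
    nlinarith
  · have h2 : (2 * μ.re - (x + y)) * μ.im = 0 := by nlinarith [him]
    rcases mul_eq_zero.mp h2 with h' | h'
    · linarith
    · exact absurd h' hv

def sumEquivProd (n : ℕ) : (Fin n ⊕ Fin n) ≃ (Fin 2 × Fin n) where
  toFun := Sum.elim (fun i => (0, i)) (fun i => (1, i))
  invFun := fun x => if x.1 = 0 then Sum.inl x.2 else Sum.inr x.2
  left_inv := by rintro (i | i) <;> simp
  right_inv := by
    rintro ⟨b, i⟩
    fin_cases b <;> simp

lemma det_fromBlocks_diagonal (n : ℕ) (p q r s : Fin n → ℂ) :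
    (fromBlocks (diagonal p) (diagonal q) (diagonal r) (diagonal s)).det =
      ∏ i, (p i * s i - q i * r i) := by
  have key : fromBlocks (diagonal p) (diagonal q) (diagonal r) (diagonal s) =
      (blockDiagonal (fun i => !![p i, q i; r i, s i])).submatrix
        (sumEquivProd n) (sumEquivProd n) := by
    ext i j
    rcases i with i | i <;> rcases j with j | j <;>
      simp [sumEquivProd, fromBlocks, blockDiagonal_apply, diagonal_apply]
  rw [key, det_submatrix_equiv_self, det_blockDiagonal]
  congr 1
  ext i
  rw [det_fin_two_of]

/-- Singular perturbation stability in the diagonal case: if all blocks are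
diagonal, the fast matrix A₂₂ is Hurwitz and the slow matrix
A₁₁ - A₁₂A₂₂⁻¹A₂₁ is Hurwitz, then for all sufficiently small ε > 0 the full
matrix [[A₁₁, A₁₂],[A₂₁/ε, A₂₂/ε]] is Hurwitz. -/
theorem singular_perturbation_diagonal (n : ℕ) (d11 d12 d21 d22 : Fin n → ℝ)
    (A11 A12 A21 A22 : Matrix (Fin n) (Fin n) ℝ)
    (h11 : A11 = Matrix.diagonal d11) (h12 : A12 = Matrix.diagonal d12)
    (h21 : A21 = Matrix.diagonal d21) (h22 : A22 = Matrix.diagonal d22)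
    (hfast : ∀ μ ∈ spectrum ℂ (A22.map Complex.ofReal), μ.re < 0)
    (hinv : IsUnit A22.det)
    (hslow : ∀ μ ∈ spectrum ℂ ((A11 - A12 * A22⁻¹ * A21).map Complex.ofReal),
      μ.re < 0) :
    ∃ ε₀ > 0, ∀ ε : ℝ, 0 < ε → ε < ε₀ →
      ∀ μ ∈ spectrum ℂ
        ((Matrix.fromBlocks A11 A12 (ε⁻¹ • A21) (ε⁻¹ • A22)).map Complex.ofReal),
        μ.re < 0 := by
  subst h11 h12 h21 h22
  -- fast eigenvalues are negative
  have hmap22 : (Matrix.diagonal d22).map Complex.ofReal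
      = diagonal (fun i => (d22 i : ℂ)) := by
    rw [Matrix.diagonal_map Complex.ofReal_zero]
  have h22neg : ∀ i, d22 i < 0 := by
    intro i
    have := hfast (d22 i) (by
      rw [hmap22, spectrum_diagonal]; exact ⟨i, rfl⟩)
    simpa using this
  have h22ne : ∀ i, d22 i ≠ 0 := fun i => ne_of_lt (h22neg i)
  -- slow eigenvalues are negative
  have hinvdiag : (Matrix.diagonal d22)⁻¹ = Matrix.diagonal (fun i => (d22 i)⁻¹) := by
    apply Matrix.inv_eq_right_inv
    rw [Matrix.diagonal_mul_diagonal]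
    have h1 : (fun i => d22 i * (d22 i)⁻¹) = fun _ => (1:ℝ) :=
      funext fun i => mul_inv_cancel₀ (h22ne i)
    rw [h1, Matrix.diagonal_one]
  have hslowdiag : Matrix.diagonal d11 - Matrix.diagonal d12 * (Matrix.diagonal d22)⁻¹ *
      Matrix.diagonal d21 = Matrix.diagonal (fun i => d11 i - d12 i * (d22 i)⁻¹ * d21 i) := by
    rw [hinvdiag, Matrix.diagonal_mul_diagonal, Matrix.diagonal_mul_diagonal,
      Matrix.diagonal_sub]
  have hslowneg : ∀ i, d11 i - d12 i * (d22 i)⁻¹ * d21 i < 0 := by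
    intro i
    have := hslow (↑(d11 i - d12 i * (d22 i)⁻¹ * d21 i)) (by
      rw [hslowdiag, Matrix.diagonal_map Complex.ofReal_zero, spectrum_diagonal]
      exact ⟨i, rfl⟩)
    simpa using this
  -- determinant positivity
  have hDpos : ∀ i, 0 < d11 i * d22 i - d12 i * d21 i := by
    intro i
    have h1 : d11 i * d22 i - d12 i * d21 i
        = d22 i * (d11 i - d12 i * (d22 i)⁻¹ * d21 i) := by
      linear_combination (d12 i * d21 i) * mul_inv_cancel₀ (h22ne i)
    rw [h1]
    exact mul_pos_of_neg_of_neg (h22neg i) (hslowneg i)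
  -- threshold
  set g : Fin n → ℝ := fun i => if d11 i ≤ 0 then 1 else -d22 i / d11 i with hg
  have hgpos : ∀ i, 0 < g i := by
    intro i
    show (0:ℝ) < if d11 i ≤ 0 then 1 else -d22 i / d11 i
    split_ifs with h
    · norm_num
    · push_neg at h
      exact div_pos (by linarith [h22neg i]) h
  set S : Finset ℝ := insert (1:ℝ) (Finset.univ.image g) with hS
  have hSne : S.Nonempty := ⟨1, Finset.mem_insert_self _ _⟩
  refine ⟨S.min' hSne, ?_, ?_⟩
  · rcases Finset.mem_insert.mp (S.min'_mem hSne) with h | h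
    · rw [h]; norm_num
    · obtain ⟨i, _, hi⟩ := Finset.mem_image.mp h
      rw [← hi]; exact hgpos i
  · intro ε hε hε0 μ hμ
    have hεg : ∀ i, ε < g i := by
      intro i
      exact lt_of_lt_of_le hε0 (S.min'_le _ (by
        rw [hS]
        exact Finset.mem_insert_of_mem (Finset.mem_image_of_mem g (Finset.mem_univ i))))
    -- trace negativity per index
    have hTneg : ∀ i, d11 i + ε⁻¹ * d22 i < 0 := by
      intro i
      have h1 : ε * d11 i + d22 i < 0 := by
        by_cases hd : d11 i ≤ 0
        · nlinarith [h22neg i]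
        · push_neg at hd
          have := hεg i
          rw [hg] at this
          simp only [not_le.mpr hd, if_false] at this
          have := (lt_div_iff₀ hd).mp this
          linarith
      have h2 : d11 i + ε⁻¹ * d22 i = ε⁻¹ * (ε * d11 i + d22 i) := by
        field_simp
      rw [h2]
      exact mul_neg_of_pos_of_neg (inv_pos.mpr hε) h1
    -- rewrite the matrix
    set M := ((Matrix.fromBlocks (Matrix.diagonal d11) (Matrix.diagonal d12)
      (ε⁻¹ • Matrix.diagonal d21) (ε⁻¹ • Matrix.diagonal d22)).map Complex.ofReal) with hM
    have hMeq : (algebraMap ℂ (Matrix (Fin n ⊕ Fin n) (Fin n ⊕ Fin n) ℂ)) μ - M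
        = fromBlocks (diagonal fun i => μ - (d11 i : ℂ))
            (diagonal fun i => -(d12 i : ℂ))
            (diagonal fun i => -((ε⁻¹ * d21 i : ℝ) : ℂ))
            (diagonal fun i => μ - ((ε⁻¹ * d22 i : ℝ) : ℂ)) := by
      ext i j
      rcases i with i | i <;> rcases j with j | j <;>
        rcases eq_or_ne i j with h | h <;>
        simp [hM, Matrix.algebraMap_matrix_apply, Matrix.fromBlocks, Matrix.diagonal_apply,
          Matrix.map_apply, Matrix.one_apply, h, Matrix.smul_apply]
    rw [spectrum.mem_iff] at hμ
    have hdet : ((algebraMap ℂ (Matrix (Fin n ⊕ Fin n) (Fin n ⊕ Fin n) ℂ)) μ - M).det = 0 := by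
      by_contra hne
      exact hμ ((Matrix.isUnit_iff_isUnit_det _).mpr (isUnit_iff_ne_zero.mpr hne))
    rw [hMeq, det_fromBlocks_diagonal] at hdet
    obtain ⟨i, _, hi⟩ := Finset.prod_eq_zero_iff.mp hdet
    refine quad_root_re_neg (d11 i) (ε⁻¹ * d22 i) (d12 i * (ε⁻¹ * d21 i)) μ (hTneg i) ?_ ?_
    · have h1 : d11 i * (ε⁻¹ * d22 i) - d12 i * (ε⁻¹ * d21 i)
          = ε⁻¹ * (d11 i * d22 i - d12 i * d21 i) := by ring
      rw [h1]
      exact mul_pos (inv_pos.mpr hε) (hDpos i)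
    · rw [← hi]
      push_cast
      ring
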